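/- arXiv:2204.06902 — 2 statements merged into one kernel-verified Lean document; each statement's English description precedes it below -/
import Mathlib

section
/- Let R₀ > 1 and let z∞ = sup{z ≥ 0 : z = 1 - exp(-R₀ z)}. Then z∞ > 1 - 1/R₀, and consequently (1 - z∞)·R₀ < 1. -/
/-- For `R₀ > 1`, with `z∞ = sup {z ≥ 0 : z = 1 - exp (-R₀ z)}`, we have
`z∞ > 1 - 1/R₀` and consequently `(1 - z∞) * R₀ < 1`. -/
theorem stmt0 (R₀ : ℝ) (hR : 1 < R₀) (zinf : ℝ)
    (hz : zinf = sSup {z : ℝ | 0 ≤ z ∧ z = 1 - Real.exp (-(R₀ * z))}) :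
    zinf > 1 - 1 / R₀ ∧ (1 - zinf) * R₀ < 1 := by
  have hR0 : (0:ℝ) < R₀ := lt_trans one_pos hR
  set S : Set ℝ := {z : ℝ | 0 ≤ z ∧ z = 1 - Real.exp (-(R₀ * z))} with hS
  set g : ℝ → ℝ := fun z => z - (1 - Real.exp (-(R₀ * z))) with hg
  have hcont : Continuous g := by fun_prop
  have ha : (0:ℝ) < 1 - 1 / R₀ := by
    have : 1 / R₀ < 1 := by
      rw [div_lt_one hR0]; exact hR
    linarith
  have hab : (1 - 1 / R₀ : ℝ) ≤ 1 := by
    have : 0 < 1 / R₀ := by positivity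
    linarith
  have hga : g (1 - 1 / R₀) < 0 := by
    have key : Real.exp (-(R₀ - 1)) < 1 / R₀ := by
      have h1 : R₀ < Real.exp (R₀ - 1) := by
        have := Real.add_one_lt_exp (x := R₀ - 1) (by linarith)
        linarith
      rw [Real.exp_neg, one_div]
      exact inv_strictAnti₀ hR0 h1
    have : -(R₀ * (1 - 1 / R₀)) = -(R₀ - 1) := by field_simp
    simp only [hg, this]
    linarith
  have hgb : 0 < g 1 := by
    simp only [hg]
    have := Real.exp_pos (-(R₀ * 1))
    linarith
  -- IVT
  have : (0:ℝ) ∈ Set.Icc (g (1 - 1/R₀)) (g 1) := ⟨le_of_lt hga, le_of_lt hgb⟩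
  obtain ⟨z, hzI, hz0⟩ := intermediate_value_Icc hab hcont.continuousOn this
  have hzfix : z = 1 - Real.exp (-(R₀ * z)) := by
    simp only [hg] at hz0; linarith
  have hzmem : z ∈ S := ⟨le_of_lt (lt_of_lt_of_le ha hzI.1), hzfix⟩
  have hzgt : 1 - 1 / R₀ < z := by
    rcases lt_or_eq_of_le hzI.1 with h | h
    · exact h
    · exfalso; rw [← h] at hz0; linarith
  have hbdd : BddAbove S := by
    refine ⟨1, fun w hw => ?_⟩
    have := Real.exp_pos (-(R₀ * w))
    have := hw.2
    linarith
  have hle : z ≤ zinf := hz ▸ le_csSup hbdd hzmem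
  have h1 : zinf > 1 - 1 / R₀ := lt_of_lt_of_le hzgt hle
  refine ⟨h1, ?_⟩
  have : (1 - zinf) < 1 / R₀ := by linarith
  calc (1 - zinf) * R₀ < (1 / R₀) * R₀ := by
        exact mul_lt_mul_of_pos_right this hR0
    _ = 1 := by field_simp
end

section
/- With a(t) = μ z (1 - e^{-ct}), R* = μzc > 1, and τ the unique positive fixed point of a, one has τ = μz(1 + W₀(-R* e^{-R*})/R*), where W₀ is the principal branch of the Lambert W function. -/
lemma xexp_deriv (x : ℝ) : deriv (fun x : ℝ => x * Real.exp x) x = (x + 1) * Real.exp x := by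
  have h : HasDerivAt (fun x : ℝ => x * Real.exp x) (1 * Real.exp x + x * Real.exp x) x :=
    (hasDerivAt_id x).mul (Real.hasDerivAt_exp x)
  rw [h.deriv]; ring

lemma xexp_mono : StrictMonoOn (fun x : ℝ => x * Real.exp x) (Set.Ici (-1)) := by
  apply strictMonoOn_of_deriv_pos (convex_Ici _)
  · exact (continuous_id.mul Real.continuous_exp).continuousOn
  · intro x hx
    rw [interior_Ici] at hx
    rw [xexp_deriv]
    have := Real.exp_pos x
    nlinarith [hx.out]

lemma xexp_anti : StrictAntiOn (fun x : ℝ => x * Real.exp x) (Set.Iic (-1)) := by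
  apply strictAntiOn_of_deriv_neg (convex_Iic _)
  · exact (continuous_id.mul Real.continuous_exp).continuousOn
  · intro x hx
    rw [interior_Iic] at hx
    rw [xexp_deriv]
    have := Real.exp_pos x
    nlinarith [hx.out]

/-- With `a(t) = μ z (1 - e^{-ct})`, `R* = μ z c > 1`, and `τ` the unique positive fixed
point of `a`, one has `τ = μ z (1 + W₀(-R* e^{-R*})/R*)` where `W₀` is the principal branch
of the Lambert W function, characterized by `W₀(x) ∈ [-1, 0)` and `W₀(x) e^{W₀(x)} = x`. -/
theorem stmt12 (μ z c τ w : ℝ) (hμ : 0 < μ) (hz : 0 < z) (hc : 0 < c)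
    (hR : 1 < μ * z * c)
    (hτpos : 0 < τ) (hτfix : μ * z * (1 - Real.exp (-(c * τ))) = τ)
    (hw_mem : w ∈ Set.Ico (-1 : ℝ) 0)
    (hw_eq : w * Real.exp w = -(μ * z * c) * Real.exp (-(μ * z * c))) :
    τ = μ * z * (1 + w / (μ * z * c)) := by
  set R := μ * z * c with hRdef
  set w' := c * τ - R with hw'def
  -- w' = -R * exp(-(c*τ))
  have h1 : w' = -R * Real.exp (-(c * τ)) := by
    have := congrArg (fun x => c * x) hτfix
    rw [hw'def, hRdef]
    nlinarith [this]
  have hw' : w' * Real.exp w' = -R * Real.exp (-R) := by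
    nth_rewrite 1 [h1]
    rw [mul_assoc, ← Real.exp_add]
    congr 2
    rw [hw'def]; ring
  by_cases hcase : -1 ≤ w'
  · have heq : w = w' := by
      apply xexp_mono.injOn (Set.mem_Ici.2 hw_mem.1) (Set.mem_Ici.2 hcase)
      simp only
      rw [hw_eq, hw', hRdef]
    rw [heq, hw'def, hRdef]
    have h0 : μ * z * c ≠ 0 := by positivity
    field_simp
    ring
  · exfalso
    push_neg at hcase
    have heq : w' = -R := by
      apply xexp_anti.injOn (Set.mem_Iic.2 hcase.le) (Set.mem_Iic.2 (by linarith))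
      simp only
      rw [hw']
    have : c * τ = 0 := by rw [hw'def] at heq; linarith
    nlinarith
end
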